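/- Let K_1, …, K_d ∈ C^{n×n}. Define, for any v ∈ C^d, K_v = ∑_j v_j K_j. Then sup over v with ‖v‖ ≤ 1 of (1/2)λ_min(K_v + K_v†) is at most (1/n)√(∑_{j=1}^d |Tr K_j|²). -/

import Mathlib

open Matrix

/-- The smallest eigenvalue of a Hermitian matrix. -/
noncomputable def lammin {n : ℕ} (A : Matrix (Fin n) (Fin n) ℂ) (hA : A.IsHermitian) : ℝ :=
  ⨅ i, hA.eigenvalues i

lemma lammin_le_eigenvalues {n : ℕ} {A : Matrix (Fin n) (Fin n) ℂ} (hA : A.IsHermitian)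
    (i : Fin n) : lammin A hA ≤ hA.eigenvalues i :=
  ciInf_le (Finite.bddBelow_range _) i

/-- For `n = 0` both sides are `0`: the infimum over `Fin 0` and the division by `0` are junk. -/
lemma lammin_le_re_trace_div {n : ℕ} {A : Matrix (Fin n) (Fin n) ℂ} (hA : A.IsHermitian) :
    lammin A hA ≤ A.trace.re / n := by
  rcases n.eq_zero_or_pos with rfl | hn
  · simp [lammin]
  rw [le_div_iff₀ (by exact_mod_cast hn), hA.trace_eq_sum_eigenvalues, Complex.re_sum]
  calc lammin A hA * n = ∑ _i : Fin n, lammin A hA := by simp [mul_comm]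
    _ ≤ ∑ i, hA.eigenvalues i := Finset.sum_le_sum fun i _ => lammin_le_eigenvalues hA i
    _ = ∑ i, (hA.eigenvalues i : ℂ).re := by simp

lemma re_trace_add_conjTranspose {ι 𝕜 : Type*} [Fintype ι] [RCLike 𝕜] (A : Matrix ι ι 𝕜) :
    RCLike.re (A + Aᴴ).trace = 2 * RCLike.re A.trace := by
  rw [trace_add, trace_conjTranspose, map_add, RCLike.star_def, RCLike.conj_re, two_mul]

lemma trace_sum_smul {ι m R : Type*} [Fintype ι] [Fintype m] [CommSemiring R]
    (v : ι → R) (K : ι → Matrix m m R) :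
    (∑ j, v j • K j).trace = ∑ j, v j * (K j).trace := by
  simp only [trace_sum, trace_smul, smul_eq_mul]

lemma norm_sum_mul_le_sqrt_mul_sqrt {ι 𝕜 : Type*} [RCLike 𝕜] (s : Finset ι) (f g : ι → 𝕜) :
    ‖∑ i ∈ s, f i * g i‖ ≤ √(∑ i ∈ s, ‖f i‖ ^ 2) * √(∑ i ∈ s, ‖g i‖ ^ 2) :=
  (norm_sum_le _ _).trans <| by
    simpa only [norm_mul] using Real.sum_mul_le_sqrt_mul_sqrt s (‖f ·‖) (‖g ·‖)

theorem half_lammin_le_sqrt_sum_trace_sq_general (n d : ℕ)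
    (K : Fin d → Matrix (Fin n) (Fin n) ℂ)
    (v : Fin d → ℂ) (hv : ∑ j, ‖v j‖ ^ 2 ≤ 1) :
    (1 / 2) * lammin ((∑ j, v j • K j) + (∑ j, v j • K j)ᴴ)
        (Matrix.isHermitian_add_transpose_self _)
      ≤ (1 / n) * Real.sqrt (∑ j, ‖Matrix.trace (K j)‖ ^ 2) := by
  have hv' : √(∑ j, ‖v j‖ ^ 2) ≤ 1 := Real.sqrt_le_one.mpr hv
  calc (1 / 2) * lammin _ _
      ≤ (1 / 2) * ((∑ j, v j • K j) + (∑ j, v j • K j)ᴴ).trace.re / n := by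
        rw [mul_div_assoc]; gcongr; exact lammin_le_re_trace_div _
    _ = (∑ j, v j * (K j).trace).re / n := by
        rw [← RCLike.re_eq_complex_re, re_trace_add_conjTranspose, trace_sum_smul]; ring
    _ ≤ ‖∑ j, v j * (K j).trace‖ / n := by gcongr; exact Complex.re_le_norm _
    _ ≤ √(∑ j, ‖v j‖ ^ 2) * √(∑ j, ‖(K j).trace‖ ^ 2) / n := by
        gcongr; exact norm_sum_mul_le_sqrt_mul_sqrt _ _ _
    _ ≤ (1 / n) * √(∑ j, ‖(K j).trace‖ ^ 2) := by
        rw [one_div_mul_eq_div]; gcongr; exact mul_le_of_le_one_left (Real.sqrt_nonneg _) hv'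

/-- For any `K_1, …, K_d` and any `v` with `‖v‖ ≤ 1`, writing `K_v = ∑_j v_j K_j`,
`(1/2) λ_min(K_v + K_vᴴ) ≤ (1/n) √(∑_j |Tr K_j|²)`; hence the supremum over such `v` is at
most this bound. -/
theorem half_lammin_le_sqrt_sum_trace_sq (n d : ℕ) (hn : 0 < n)
    (K : Fin d → Matrix (Fin n) (Fin n) ℂ)
    (v : Fin d → ℂ) (hv : ∑ j, ‖v j‖ ^ 2 ≤ 1) :
    (1 / 2) * lammin ((∑ j, v j • K j) + (∑ j, v j • K j)ᴴ)
        (Matrix.isHermitian_add_transpose_self _)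
      ≤ (1 / n) * Real.sqrt (∑ j, ‖Matrix.trace (K j)‖ ^ 2) :=
  half_lammin_le_sqrt_sum_trace_sq_general n d K v hv
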